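/- For k ≥ 2 and n ≥ binom(k,2) + 2k, let K̂_n^{(k,k)} be the graph obtained from the complete graph on vertices v₁,…,v_n by subdividing every edge v_iv_j with i,j ≤ k and every edge v_iv_j with i,j > n−k. Then the sum index of K̂_n^{(k,k)} equals 2n − 2k − 1. -/
import Mathlib


open SimpleGraph

/-- The subdivided pairs of `K̂_n^{(k,k)}` (0-indexed): pairs `i < j` with both among
the first `k` vertices, or both among the last `k` vertices. -/
def subPairs (n k : ℕ) : Type :=
  {p : Fin n × Fin n // p.1 < p.2 ∧ (((p.2 : ℕ) < k) ∨ (n - k ≤ (p.1 : ℕ)))}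

instance (n k : ℕ) : Fintype (subPairs n k) := by unfold subPairs; infer_instance

/-- `K̂_n^{(k,k)}`: the complete graph on `v₀,…,v_{n-1}` with every edge inside the first
`k` vertices and every edge inside the last `k` vertices subdivided. -/
def hatKkk (n k : ℕ) : SimpleGraph (Fin n ⊕ subPairs n k) :=
  SimpleGraph.fromRel (fun a b =>
    match a, b with
    | Sum.inl i, Sum.inl j =>
        ¬(((i : ℕ) < k ∧ (j : ℕ) < k) ∨ (n - k ≤ (i : ℕ) ∧ n - k ≤ (j : ℕ)))
    | Sum.inl i, Sum.inr p => i = p.1.1 ∨ i = p.1.2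
    | Sum.inr _, Sum.inl _ => False
    | Sum.inr _, Sum.inr _ => False)

/-- The sum index of a finite simple graph. -/
noncomputable def sumIndex {V : Type*} [Fintype V] (G : SimpleGraph V) : ℕ :=
  sInf {n | ∃ f : V → ℤ, Function.Injective f ∧
    {s : ℤ | ∃ u v, G.Adj u v ∧ s = f u + f v}.ncard = n}

/-! ### Auxiliary material -/

lemma adj_inl_inl {n k : ℕ} {i j : Fin n} :
    (hatKkk n k).Adj (Sum.inl i) (Sum.inl j) ↔
      i ≠ j ∧ ¬(((i:ℕ) < k ∧ (j:ℕ) < k) ∨ (n - k ≤ (i:ℕ) ∧ n - k ≤ (j:ℕ))) := by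
  simp only [hatKkk, fromRel_adj, Sum.inl.injEq, ne_eq]
  constructor
  · rintro ⟨h1, h2 | h2⟩ <;> exact ⟨h1, by tauto⟩
  · rintro ⟨h1, h2⟩; exact ⟨h1, Or.inl h2⟩

lemma adj_inl_inr {n k : ℕ} {i : Fin n} {p : subPairs n k} :
    (hatKkk n k).Adj (Sum.inl i) (Sum.inr p) ↔ (i = p.1.1 ∨ i = p.1.2) := by
  simp [hatKkk, fromRel_adj]

lemma not_adj_inr_inr {n k : ℕ} {p q : subPairs n k} :
    ¬ (hatKkk n k).Adj (Sum.inr p) (Sum.inr q) := by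
  simp [hatKkk, fromRel_adj]

lemma code_lt' {a b k : ℕ} (hab : a < b) (hbk : b < k) :
    b.choose 2 + a < k.choose 2 := by
  have h0 : (b+1).choose 2 = b.choose 2 + b := by
    rw [Nat.choose_succ_succ]
    simp [Nat.choose_one_right, Nat.add_comm]
  have h2 : (b+1).choose 2 ≤ k.choose 2 := Nat.choose_le_choose 2 hbk
  omega

lemma code_inj' {a b a' b' : ℕ} (h : a < b) (h' : a' < b')
    (he : b.choose 2 + a = b'.choose 2 + a') : a = a' ∧ b = b' := by
  rcases lt_trichotomy b b' with hb | hb | hb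
  · have h1 := code_lt' h hb
    have h2 : b'.choose 2 ≤ b'.choose 2 + a' := Nat.le_add_right _ _
    omega
  · subst hb; omega
  · have h1 := code_lt' h' hb
    have h2 : b.choose 2 ≤ b.choose 2 + a := Nat.le_add_right _ _
    omega

/-- The optimal labelling. -/
def lab (n k : ℕ) : (Fin n ⊕ subPairs n k) → ℤ
  | Sum.inl i => (i : ℤ) + 1
  | Sum.inr p =>
      if (p.1.2 : ℕ) < k then
        (n : ℤ) + 1 + ((((p.1.2 : ℕ)).choose 2 + (p.1.1 : ℕ) : ℕ) : ℤ)
      else -(((((p.1.2 : ℕ) - (n - k)).choose 2 + ((p.1.1 : ℕ) - (n - k)) : ℕ) : ℤ))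

lemma sums_finite {V : Type*} [Fintype V] (G : SimpleGraph V) (f : V → ℤ) :
    {s : ℤ | ∃ u v, G.Adj u v ∧ s = f u + f v}.Finite := by
  apply Set.Finite.subset (Set.finite_range (fun p : V × V => f p.1 + f p.2))
  rintro s ⟨u, v, _, rfl⟩; exact ⟨(u, v), rfl⟩

section main

variable {n k : ℕ} (hk : 2 ≤ k) (hn : k.choose 2 + 2 * k ≤ n)

/-- Basic facts about a subdivided pair. -/
lemma subPairs_facts (p : subPairs n k) :
    (p.1.1 : ℕ) < (p.1.2 : ℕ) ∧ (p.1.2 : ℕ) < n ∧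
      (((p.1.2 : ℕ) < k) ∨ (n - k ≤ (p.1.1 : ℕ))) :=
  ⟨p.2.1, p.1.2.isLt, p.2.2⟩

include hk hn in
lemma lab_inj : Function.Injective (lab n k) := by
  have hC : 0 < k.choose 2 := Nat.choose_pos (by omega)
  intro u v huv
  match u, v with
  | Sum.inl i, Sum.inl j =>
    simp only [lab, add_left_inj, Int.natCast_inj] at huv
    exact congrArg Sum.inl (Fin.ext (by exact_mod_cast huv))
  | Sum.inl i, Sum.inr p =>
    exfalso
    have hi : (i : ℕ) < n := i.isLt
    obtain ⟨h1, h2, h3⟩ := subPairs_facts p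
    by_cases hb : (p.1.2 : ℕ) < k <;>
      simp only [lab, hb, if_true, if_false] at huv <;> omega
  | Sum.inr p, Sum.inl i =>
    exfalso
    have hi : (i : ℕ) < n := i.isLt
    obtain ⟨h1, h2, h3⟩ := subPairs_facts p
    by_cases hb : (p.1.2 : ℕ) < k <;>
      simp only [lab, hb, if_true, if_false] at huv <;> omega
  | Sum.inr p, Sum.inr q =>
    obtain ⟨h1, h2, h3⟩ := subPairs_facts p
    obtain ⟨g1, g2, g3⟩ := subPairs_facts q
    congr 1
    by_cases hb : (p.1.2 : ℕ) < k <;> by_cases gb : (q.1.2 : ℕ) < k <;>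
      simp only [lab, hb, gb, if_true, if_false] at huv
    · -- both bottom
      have he : (p.1.2 : ℕ).choose 2 + (p.1.1 : ℕ)
          = (q.1.2 : ℕ).choose 2 + (q.1.1 : ℕ) := by omega
      obtain ⟨e1, e2⟩ := code_inj' h1 g1 he
      exact Subtype.ext (Prod.ext (Fin.ext e1) (Fin.ext e2))
    · exfalso; omega
    · exfalso; omega
    · -- both top
      have hp : n - k ≤ (p.1.1 : ℕ) := by omega
      have hq : n - k ≤ (q.1.1 : ℕ) := by omega
      have he : ((p.1.2 : ℕ) - (n - k)).choose 2 + ((p.1.1 : ℕ) - (n - k))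
          = ((q.1.2 : ℕ) - (n - k)).choose 2 + ((q.1.1 : ℕ) - (n - k)) := by omega
      obtain ⟨e1, e2⟩ := code_inj' (by omega : (p.1.1:ℕ) - (n-k) < (p.1.2:ℕ) - (n-k))
        (by omega : (q.1.1:ℕ) - (n-k) < (q.1.2:ℕ) - (n-k)) he
      exact Subtype.ext (Prod.ext (Fin.ext (by omega)) (Fin.ext (by omega)))

include hk hn in
lemma sums_eq :
    {s : ℤ | ∃ u v, (hatKkk n k).Adj u v ∧ s = lab n k u + lab n k v}
      = Set.Icc ((k : ℤ) + 2) (2 * n - k) := by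
  have hC : 0 < k.choose 2 := Nat.choose_pos (by omega)
  ext s
  constructor
  · rintro ⟨u, v, huv, rfl⟩
    match u, v with
    | Sum.inl i, Sum.inl j =>
      rw [adj_inl_inl] at huv
      obtain ⟨hne, hcond⟩ := huv
      have hi : (i : ℕ) < n := i.isLt
      have hj : (j : ℕ) < n := j.isLt
      simp only [lab, Set.mem_Icc]
      constructor <;> push_cast <;> omega
    | Sum.inl i, Sum.inr p =>
      rw [adj_inl_inr] at huv
      obtain ⟨h1, h2, h3⟩ := subPairs_facts p
      have hi : (i : ℕ) = (p.1.1 : ℕ) ∨ (i : ℕ) = (p.1.2 : ℕ) := by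
        rcases huv with h | h <;> [left; right] <;> exact congrArg Fin.val h
      simp only [Set.mem_Icc]
      by_cases hb : (p.1.2 : ℕ) < k <;> simp only [lab, hb, if_true, if_false]
      · have hc := code_lt' h1 hb
        constructor <;> push_cast <;> omega
      · have hp : n - k ≤ (p.1.1 : ℕ) := by omega
        have hc := code_lt' (by omega : (p.1.1:ℕ) - (n-k) < (p.1.2:ℕ) - (n-k))
          (by omega : (p.1.2:ℕ) - (n-k) < k)
        constructor <;> push_cast <;> omega
    | Sum.inr p, Sum.inl i =>
      rw [(hatKkk n k).adj_comm, adj_inl_inr] at huv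
      obtain ⟨h1, h2, h3⟩ := subPairs_facts p
      have hi : (i : ℕ) = (p.1.1 : ℕ) ∨ (i : ℕ) = (p.1.2 : ℕ) := by
        rcases huv with h | h <;> [left; right] <;> exact congrArg Fin.val h
      simp only [Set.mem_Icc]
      by_cases hb : (p.1.2 : ℕ) < k <;> simp only [lab, hb, if_true, if_false]
      · have hc := code_lt' h1 hb
        constructor <;> push_cast <;> omega
      · have hp : n - k ≤ (p.1.1 : ℕ) := by omega
        have hc := code_lt' (by omega : (p.1.1:ℕ) - (n-k) < (p.1.2:ℕ) - (n-k))
          (by omega : (p.1.2:ℕ) - (n-k) < k)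
        constructor <;> push_cast <;> omega
    | Sum.inr p, Sum.inr q => exact absurd huv not_adj_inr_inr
  · intro hs
    simp only [Set.mem_Icc] at hs
    obtain ⟨hs1, hs2⟩ := hs
    have hs0 : 0 ≤ s := by omega
    obtain ⟨m, rfl⟩ : ∃ m : ℕ, s = (m : ℤ) := ⟨s.toNat, (Int.toNat_of_nonneg hs0).symm⟩
    have hm1 : k + 2 ≤ m := by exact_mod_cast hs1
    have hm2 : m ≤ 2 * n - k := by omega
    by_cases hcase : m ≤ n + 1
    · refine ⟨Sum.inl ⟨0, by omega⟩, Sum.inl ⟨m - 2, by omega⟩, ?_, ?_⟩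
      · rw [adj_inl_inl]
        refine ⟨?_, ?_⟩
        · intro h
          have := congrArg Fin.val h
          simp only [Fin.val_mk] at this
          omega
        · simp only [Fin.val_mk]; omega
      · simp only [lab, Fin.val_mk]; push_cast; omega
    · refine ⟨Sum.inl ⟨m - n - 1, by omega⟩, Sum.inl ⟨n - 1, by omega⟩, ?_, ?_⟩
      · rw [adj_inl_inl]
        refine ⟨?_, ?_⟩
        · intro h
          have := congrArg Fin.val h
          simp only [Fin.val_mk] at this
          omega
        · simp only [Fin.val_mk]; omega
      · simp only [lab, Fin.val_mk]; push_cast; omega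

include hk hn in
lemma icc_card : (Set.Icc ((k : ℤ) + 2) (2 * n - k)).ncard = 2 * n - 2 * k - 1 := by
  rw [← Finset.coe_Icc, Set.ncard_coe_finset, Int.card_Icc]
  have hC : 0 < k.choose 2 := Nat.choose_pos (by omega)
  omega

include hk hn in
lemma lower_bound (f : (Fin n ⊕ subPairs n k) → ℤ) (hf : Function.Injective f) :
    2 * n - 2 * k - 1 ≤
      {s : ℤ | ∃ u v, (hatKkk n k).Adj u v ∧ s = f u + f v}.ncard := by
  classical
  have hC : 0 < k.choose 2 := Nat.choose_pos (by omega)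
  have hkn : 2 * k ≤ n := by omega
  set S := {s : ℤ | ∃ u v, (hatKkk n k).Adj u v ∧ s = f u + f v} with hSdef
  have hSfin : S.Finite := sums_finite _ f
  have hnpos : 0 < n := by omega
  haveI : Nonempty (Fin n) := ⟨⟨0, hnpos⟩⟩
  obtain ⟨u1, hu1⟩ := Finite.exists_min (fun i : Fin n => f (Sum.inl i))
  obtain ⟨un, hun⟩ := Finite.exists_max (fun i : Fin n => f (Sum.inl i))
  set N1 : Set (Fin n) := {j | (hatKkk n k).Adj (Sum.inl u1) (Sum.inl j)} with hN1def
  set N2 : Set (Fin n) := {j | (hatKkk n k).Adj (Sum.inl j) (Sum.inl un)} with hN2def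
  set S1 := (fun j : Fin n => f (Sum.inl u1) + f (Sum.inl j)) '' N1 with hS1def
  set S2 := (fun j : Fin n => f (Sum.inl j) + f (Sum.inl un)) '' N2 with hS2def
  have hfinj : Function.Injective (fun j : Fin n => f (Sum.inl j)) :=
    fun a b h => Sum.inl_injective (hf h)
  -- complements are small
  have hsmall : ∀ u : Fin n,
      {j : Fin n | ¬ (hatKkk n k).Adj (Sum.inl u) (Sum.inl j)}.ncard ≤ k := by
    intro u
    set B := {j : Fin n | ¬ (hatKkk n k).Adj (Sum.inl u) (Sum.inl j)} with hBdef
    have hBmem : ∀ j ∈ B, j = u ∨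
        (((u:ℕ) < k ∧ (j:ℕ) < k) ∨ (n - k ≤ (u:ℕ) ∧ n - k ≤ (j:ℕ))) := by
      intro j hj
      simp only [hBdef, Set.mem_setOf_eq, adj_inl_inl, not_and, not_not] at hj
      by_cases he : u = j
      · exact Or.inl he.symm
      · exact Or.inr (hj he)
    have hcoe : ↑(Finset.range k) = {m : ℕ | m < k} := by
      ext m; simp
    by_cases hu1k : (u : ℕ) < k
    · have : B.ncard ≤ ({m : ℕ | m < k}).ncard := by
        apply Set.ncard_le_ncard_of_injOn (fun j : Fin n => (j : ℕ))
        · intro j hj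
          rcases hBmem j hj with h | h | h
          · subst h; exact hu1k
          · exact h.2
          · exfalso; omega
        · exact fun a _ b _ h => Fin.ext h
      rwa [← hcoe, Set.ncard_coe_finset, Finset.card_range] at this
    · by_cases hu1t : n - k ≤ (u : ℕ)
      · have : B.ncard ≤ ({m : ℕ | m < k}).ncard := by
          apply Set.ncard_le_ncard_of_injOn (fun j : Fin n => (j : ℕ) - (n - k))
          · intro j hj
            have hjn : (j : ℕ) < n := j.isLt
            have hun' : (u : ℕ) < n := u.isLt
            rcases hBmem j hj with h | h | h
            · subst h; simp only [Set.mem_setOf_eq]; omega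
            · exfalso; omega
            · simp only [Set.mem_setOf_eq]; omega
          · intro a ha b hb h
            have ha' : n - k ≤ (a : ℕ) := by
              rcases hBmem a ha with h' | h' | h'
              · subst h'; exact hu1t
              · exfalso; omega
              · exact h'.2
            have hb' : n - k ≤ (b : ℕ) := by
              rcases hBmem b hb with h' | h' | h'
              · subst h'; exact hu1t
              · exfalso; omega
              · exact h'.2
            have h' : (a : ℕ) - (n - k) = (b : ℕ) - (n - k) := h
            exact Fin.ext (by omega)
        rwa [← hcoe, Set.ncard_coe_finset, Finset.card_range] at this
      · have hsub : B ⊆ {u} := by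
          intro j hj
          rcases hBmem j hj with h | h | h
          · exact h
          · exfalso; omega
          · exfalso; omega
        calc B.ncard ≤ ({u} : Set (Fin n)).ncard :=
              Set.ncard_le_ncard hsub (Set.finite_singleton u)
          _ = 1 := Set.ncard_singleton u
          _ ≤ k := by omega
  -- the neighbourhoods are big
  have hbig : ∀ (u : Fin n) (N : Set (Fin n)),
      N = {j | (hatKkk n k).Adj (Sum.inl u) (Sum.inl j)} → n - k ≤ N.ncard := by
    intro u N hN
    have hunion : N ∪ {j : Fin n | ¬ (hatKkk n k).Adj (Sum.inl u) (Sum.inl j)}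
        = Set.univ := by
      ext j
      by_cases h : (hatKkk n k).Adj (Sum.inl u) (Sum.inl j) <;> simp [hN, h]
    have h1 := Set.ncard_union_le N {j : Fin n | ¬ (hatKkk n k).Adj (Sum.inl u) (Sum.inl j)}
    rw [hunion] at h1
    have h2 : (Set.univ : Set (Fin n)).ncard = n := by
      rw [Set.ncard_univ]; simp
    have h3 := hsmall u
    omega
  have hN1big : n - k ≤ N1.ncard := hbig u1 N1 rfl
  have hN2big : n - k ≤ N2.ncard := by
    apply hbig un
    ext j
    simp only [hN2def, Set.mem_setOf_eq]
    exact (hatKkk n k).adj_comm _ _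
  -- cardinalities of the sum sets
  have hS1card : S1.ncard = N1.ncard :=
    Set.ncard_image_of_injective _ (fun a b h => hfinj (add_left_cancel h))
  have hS2card : S2.ncard = N2.ncard :=
    Set.ncard_image_of_injective _ (fun a b h => hfinj (add_right_cancel h))
  have hS1fin : S1.Finite := (Set.toFinite N1).image _
  have hS2fin : S2.Finite := (Set.toFinite N2).image _
  have hS1sub : S1 ⊆ S := by
    rintro x ⟨j, hj, rfl⟩
    exact ⟨Sum.inl u1, Sum.inl j, hj, rfl⟩
  have hS2sub : S2 ⊆ S := by
    rintro x ⟨j, hj, rfl⟩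
    exact ⟨Sum.inl j, Sum.inl un, hj, rfl⟩
  have hinter : (S1 ∩ S2).ncard ≤ 1 := by
    have hsub : S1 ∩ S2 ⊆ {f (Sum.inl u1) + f (Sum.inl un)} := by
      rintro x ⟨⟨j, _, rfl⟩, ⟨i, _, hx⟩⟩
      have l1 : f (Sum.inl j) ≤ f (Sum.inl un) := hun j
      have l2 : f (Sum.inl u1) ≤ f (Sum.inl i) := hu1 i
      have hx' : f (Sum.inl i) + f (Sum.inl un) = f (Sum.inl u1) + f (Sum.inl j) := hx
      show f (Sum.inl u1) + f (Sum.inl j) ∈ _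
      simp only [Set.mem_singleton_iff]
      omega
    calc (S1 ∩ S2).ncard ≤ ({f (Sum.inl u1) + f (Sum.inl un)} : Set ℤ).ncard :=
          Set.ncard_le_ncard hsub (Set.finite_singleton _)
      _ = 1 := Set.ncard_singleton _
  have hunion_card := Set.ncard_union_add_ncard_inter S1 S2 hS1fin hS2fin
  have hUle : (S1 ∪ S2).ncard ≤ S.ncard :=
    Set.ncard_le_ncard (Set.union_subset hS1sub hS2sub) hSfin
  omega

end main

/-- For `k ≥ 2` and `n ≥ C(k,2) + 2k`, the sum index of `K̂_n^{(k,k)}`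
equals `2n - 2k - 1`. -/
theorem stmt12 (n k : ℕ) (hk : 2 ≤ k) (hn : k.choose 2 + 2 * k ≤ n) :
    sumIndex (hatKkk n k) = 2 * n - 2 * k - 1 := by
  have hmem : (2 * n - 2 * k - 1) ∈ {m | ∃ f : (Fin n ⊕ subPairs n k) → ℤ,
      Function.Injective f ∧
      {s : ℤ | ∃ u v, (hatKkk n k).Adj u v ∧ s = f u + f v}.ncard = m} := by
    exact ⟨lab n k, lab_inj hk hn, by rw [sums_eq hk hn]; exact icc_card hk hn⟩
  apply le_antisymm
  · exact Nat.sInf_le hmem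
  · apply le_csInf ⟨_, hmem⟩
    rintro m ⟨f, hf, rfl⟩
    exact lower_bound hk hn f hf
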